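/- Under the Kähler cvc(1) package described in the context, if dim V ≥ 6, then λ(v) = 4 for every unit vector v ∈ V, where λ(v) = R(v,Av,Av,v)/‖Av‖². -/

import Mathlib

/-!
For `w ⊥ y` the eigenspace condition reads: `R(w, y, y, ·) = ‖y‖² ⟪w, ·⟫` iff `w ⊥ A y`.
Applying it along the line `y = v + t w` and extracting the coefficient of `t` gives a polarized
identity. Conjugating the condition by `J` with the Kähler identity shows that `J` maps
`span {y, A y}ᗮ` into `span {J y, A J y}ᗮ`, so `A J = c J A` for a constant `c`, and skewness
forces `c = ±1`.

If `A J = -J A`, the polarized identity at `(v, J v, J A v)` gives `R(A v, v, v, A v) = ‖v‖² ‖A v‖²`,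
which would put `A v` into the curvature-one eigenspace of `v`.

If `A J = J A`, then `S = -J A` is symmetric, commutes with `J`, and `A = J S`. For unit
eigenvectors `x`, `y` of `S` with eigenvalues `s`, `t` and `y ⊥ x, J x`, the polarized identity at
`(x, y, J y)`, the values `sec(x, y) = sec(J x, y) = 1` and the Bianchi identity give
`3 s = (H(x) - 1) t`, where `H(x) = R(J x, x, x, J x)`. As `dim V ≥ 6`, two unit eigenvectors always
admit a third one orthogonal to both complex lines they span, which forces all eigenvalues of `S` to
agree: `A = s J`. Then `3 s = (H(v) - 1) s` gives `λ(v) = H(v) = 4`.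
-/

open scoped RealInnerProductSpace

section

variable {V : Type*} [NormedAddCommGroup V] [InnerProductSpace ℝ V]

section LinearAlgebra

lemma inner_apply_self_eq_zero_of_skew {A : V →ₗ[ℝ] V}
    (hA : ∀ x y : V, ⟪A x, y⟫ = -⟪x, A y⟫) (x : V) : ⟪A x, x⟫ = 0 := by
  linarith [hA x x, real_inner_comm (A x) x]

lemma skew_of_inner_map_map {J : V →ₗ[ℝ] V} (hJiso : ∀ x y : V, ⟪J x, J y⟫ = ⟪x, y⟫)
    (hJ2 : ∀ x : V, J (J x) = -x) (x y : V) : ⟪J x, y⟫ = -⟪x, J y⟫ := by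
  have h := hJiso x (J y)
  rw [hJ2, inner_neg_right] at h
  linarith

lemma mem_orthogonal_span_pair_iff {a b w : V} :
    w ∈ (Submodule.span ℝ {a, b})ᗮ ↔ ⟪w, a⟫ = 0 ∧ ⟪w, b⟫ = 0 := by
  rw [Submodule.span_insert, ← Submodule.inf_orthogonal, Submodule.mem_inf,
    Submodule.mem_orthogonal_singleton_iff_inner_left,
    Submodule.mem_orthogonal_singleton_iff_inner_left, real_inner_comm a, real_inner_comm b]

lemma LinearMap.exists_eq_smul_of_forall_exists_eq_smul {K M N : Type*} [Field K]
    [AddCommGroup M] [Module K M] [AddCommGroup N] [Module K N] {f g : M →ₗ[K] N}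
    (hg : Function.Bijective g) (h : ∀ x, ∃ b : K, f x = b • g x) : ∃ c : K, f = c • g := by
  let e := LinearEquiv.ofBijective g hg
  obtain ⟨c, hc⟩ := (e.symm.toLinearMap ∘ₗ f).exists_eq_smul_id_of_forall_notLinearIndependent
    fun x => by
      obtain ⟨b, hb⟩ := h x
      rw [LinearIndependent.pair_iff]
      push Not
      refine ⟨b, -1, ?_, by norm_num⟩
      have : e.symm (g x) = x := e.symm_apply_apply x
      simp [hb, this]
  refine ⟨c, LinearMap.ext fun x => ?_⟩
  have := LinearMap.congr_fun hc x
  simp only [LinearMap.comp_apply, LinearEquiv.coe_coe, LinearMap.smul_apply,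
    Module.End.one_apply] at this
  rw [LinearMap.smul_apply, ← e.apply_symm_apply (f x), this, map_smul]
  rfl

lemma eq_one_or_eq_neg_one_of_apply_J_eq_smul [Nontrivial V] {J A : V →ₗ[ℝ] V}
    (hJiso : ∀ x y : V, ⟪J x, J y⟫ = ⟪x, y⟫) (hJ2 : ∀ x : V, J (J x) = -x)
    (hAskew : ∀ x y : V, ⟪A x, y⟫ = -⟪x, A y⟫) (hAinj : Function.Injective A) {c : ℝ}
    (hc : ∀ x, A (J x) = c • J (A x)) : c = 1 ∨ c = -1 := by
  have hJskew := skew_of_inner_map_map hJiso hJ2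
  have key : ∀ x y : V, (1 - c ^ 2) * ⟪x, J (A y)⟫ = 0 := by
    intro x y
    have e1 := hAskew (J x) y
    have e2 := hAskew x (J y)
    rw [hc, real_inner_smul_left] at e1
    rw [hc, real_inner_smul_right] at e2
    linear_combination -e1 + c * hJskew (A x) y + hJskew x (A y) - c * e2
  obtain ⟨y, hy⟩ := exists_ne (0 : V)
  have hJAy : J (A y) ≠ 0 := by
    intro h0
    have := congrArg J h0
    rw [hJ2, map_zero, neg_eq_zero] at this
    exact hy (hAinj (this.trans (map_zero A).symm))
  have := key (J (A y)) y
  rwa [mul_eq_zero, or_iff_left (inner_self_ne_zero.mpr hJAy), sub_eq_zero, eq_comm,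
    sq_eq_one_iff] at this

lemma LinearMap.IsSymmetric.exists_unit_eigenvector_orthogonal [FiniteDimensional ℝ V]
    {S : V →ₗ[ℝ] V} (hS : S.IsSymmetric) (s : Finset V) (hs : s.card < Module.finrank ℝ V)
    (heig : ∀ x ∈ s, ∃ c : ℝ, S x = c • x) :
    ∃ u : V, ‖u‖ = 1 ∧ (∃ r : ℝ, S u = r • u) ∧ ∀ x ∈ s, ⟪u, x⟫ = 0 := by
  set K := Submodule.span ℝ (s : Set V)
  have hK : K ≤ K.comap S := Submodule.span_le.mpr fun x hx => by
    obtain ⟨c, hc⟩ := heig x hx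
    simpa [hc] using K.smul_mem c (Submodule.subset_span hx)
  have hKperp : ∀ w ∈ Kᗮ, S w ∈ Kᗮ := fun w hw =>
    (Submodule.mem_orthogonal _ _).mpr fun x hx => by
      rw [← hS]; exact (Submodule.mem_orthogonal _ _).mp hw _ (hK hx)
  have : Nontrivial Kᗮ := by
    apply Module.nontrivial_of_finrank_pos (R := ℝ)
    have hsum := K.finrank_add_finrank_orthogonal
    have hKs : Module.finrank ℝ K ≤ s.card := finrank_span_finset_le_card s
    omega
  obtain ⟨μ, hμ⟩ : ∃ μ : ℝ, Module.End.HasEigenvalue (S.restrict hKperp) μ :=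
    ⟨_, (hS.restrict_invariant hKperp).hasEigenvalue_iSup_of_finiteDimensional⟩
  obtain ⟨w, hw⟩ := hμ.exists_hasEigenvector
  have hw0 : (w : V) ≠ 0 := by simpa using hw.2
  refine ⟨‖(w : V)‖⁻¹ • (w : V), norm_smul_inv_norm hw0, ⟨μ, ?_⟩, fun x hx => ?_⟩
  · rw [map_smul, smul_comm]
    congr 1
    simpa using congrArg Subtype.val hw.apply_eq_smul
  · rw [real_inner_smul_left, real_inner_comm,
      (Submodule.mem_orthogonal _ _).mp w.2 x (Submodule.subset_span hx), mul_zero]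

lemma LinearMap.IsSymmetric.exists_eq_smul_of_eigenvalues_eq [FiniteDimensional ℝ V]
    [Nontrivial V] {S : V →ₗ[ℝ] V} (hS : S.IsSymmetric)
    (h : ∀ (u u' : V) (μ ν : ℝ), ‖u‖ = 1 → ‖u'‖ = 1 → S u = μ • u → S u' = ν • u' → μ = ν) :
    ∃ s : ℝ, ∀ x, S x = s • x := by
  obtain ⟨u, hu, ⟨s, hSu⟩, -⟩ :=
    hS.exists_unit_eigenvector_orthogonal ∅ Module.finrank_pos (by simp)
  let b := hS.eigenvectorBasis rfl
  refine ⟨s, fun x => LinearMap.congr_fun (b.toBasis.ext (f₂ := s • LinearMap.id) fun i => ?_) x⟩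
  have hb := hS.apply_eigenvectorBasis rfl i
  rw [OrthonormalBasis.coe_toBasis, hb, LinearMap.smul_apply, LinearMap.id_apply,
    h _ u _ s (b.orthonormal.1 i) hu hb hSu]

end LinearAlgebra

section KahlerCurvature

variable {J : V →ₗ[ℝ] V} {R : V →ₗ[ℝ] V →ₗ[ℝ] V →ₗ[ℝ] V →ₗ[ℝ] ℝ}

lemma curvature_swap_right (hskew : ∀ X Y Z W : V, R X Y Z W = - R Y X Z W)
    (hpair : ∀ X Y Z W : V, R X Y Z W = R Z W X Y) (X Y Z W : V) :
    R X Y Z W = - R X Y W Z := by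
  rw [hpair, hskew, hpair]

lemma curvature_J_right (hJ2 : ∀ x : V, J (J x) = -x)
    (hpair : ∀ X Y Z W : V, R X Y Z W = R Z W X Y)
    (hkahler : ∀ X Y Z W : V, R (J X) (J Y) Z W = R X Y Z W) (X Y Z W : V) :
    R X Y (J Z) W = - R X Y Z (J W) := by
  rw [hpair, ← hkahler, hJ2, hpair]
  simp

lemma curvature_sectional_J_comm (hJ2 : ∀ x : V, J (J x) = -x)
    (hpair : ∀ X Y Z W : V, R X Y Z W = R Z W X Y)
    (hkahler : ∀ X Y Z W : V, R (J X) (J Y) Z W = R X Y Z W) (x y : V) :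
    R x (J y) (J y) x = R y (J x) (J x) y := by
  have h := hkahler x (J y) (J y) x
  rw [hJ2] at h
  simp only [map_neg, LinearMap.neg_apply] at h
  linarith [curvature_J_right hJ2 hpair hkahler (J x) y y x, hpair (J x) y y (J x)]

lemma curvature_J_cross (hJ2 : ∀ x : V, J (J x) = -x)
    (hskew : ∀ X Y Z W : V, R X Y Z W = - R Y X Z W)
    (hpair : ∀ X Y Z W : V, R X Y Z W = R Z W X Y)
    (hkahler : ∀ X Y Z W : V, R (J X) (J Y) Z W = R X Y Z W) (x y : V) :
    R (J y) x y (J x) = R y (J x) (J x) y := by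
  linarith [curvature_sectional_J_comm hJ2 hpair hkahler x y, hpair (J y) x x (J y),
    curvature_J_right hJ2 hpair hkahler (J y) x y x,
    curvature_swap_right hskew hpair (J y) x (J y) x]

lemma curvature_bisectional (hJ2 : ∀ x : V, J (J x) = -x)
    (hskew : ∀ X Y Z W : V, R X Y Z W = - R Y X Z W)
    (hpair : ∀ X Y Z W : V, R X Y Z W = R Z W X Y)
    (hbianchi : ∀ X Y Z W : V, R X Y Z W + R Y Z X W + R Z X Y W = 0)
    (hkahler : ∀ X Y Z W : V, R (J X) (J Y) Z W = R X Y Z W) (x y : V) :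
    R x (J x) (J y) y = R y x x y + R y (J x) (J x) y := by
  linarith [hbianchi x (J x) (J y) y, hkahler x y x y, curvature_swap_right hskew hpair x y x y,
    hpair x y y x, curvature_J_right hJ2 hpair hkahler (J y) x x y, hpair (J y) x x (J y),
    curvature_sectional_J_comm hJ2 hpair hkahler x y]

end KahlerCurvature

section JacobiEigenspace

variable {J A : V →ₗ[ℝ] V} {R : V →ₗ[ℝ] V →ₗ[ℝ] V →ₗ[ℝ] V →ₗ[ℝ] ℝ}

def JacobiOneEigenspaceEq (R : V →ₗ[ℝ] V →ₗ[ℝ] V →ₗ[ℝ] V →ₗ[ℝ] ℝ) (A : V →ₗ[ℝ] V) : Prop :=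
  ∀ v : V, ‖v‖ = 1 → ∀ w : V,
    (⟪w, v⟫ = 0 ∧ ∀ u : V, R w v v u = ⟪w, u⟫) ↔ w ∈ (Submodule.span ℝ {v, A v})ᗮ

namespace JacobiOneEigenspaceEq

lemma curvature_eq_iff (hE : JacobiOneEigenspaceEq R A) {y w : V} (hwy : ⟪w, y⟫ = 0) :
    (∀ u, R w y y u = ⟪y, y⟫ * ⟪w, u⟫) ↔ ⟪w, A y⟫ = 0 := by
  rcases eq_or_ne y 0 with rfl | hy
  · simp
  obtain ⟨v, hv, c, hc, rfl⟩ : ∃ v : V, ‖v‖ = 1 ∧ ∃ c : ℝ, c ≠ 0 ∧ y = c • v :=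
    ⟨‖y‖⁻¹ • y, norm_smul_inv_norm hy, ‖y‖, norm_ne_zero_iff.mpr hy,
      by rw [smul_smul, mul_inv_cancel₀ (norm_ne_zero_iff.mpr hy), one_smul]⟩
  have hwv : ⟪w, v⟫ = 0 := by simpa [real_inner_smul_right, hc] using hwy
  have h := hE v hv w
  rw [mem_orthogonal_span_pair_iff] at h
  simp only [map_smul, LinearMap.smul_apply, smul_eq_mul, real_inner_smul_left,
    real_inner_smul_right, inner_self_eq_one_of_norm_eq_one hv, hwv, true_and, mul_eq_zero, hc,
    false_or] at h ⊢
  rw [← h]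
  refine forall_congr' fun u => ⟨fun h' => ?_, fun h' => by rw [h']; ring⟩
  have : c * c * (R w v v u - ⟪w, u⟫) = 0 := by linear_combination h'
  simpa [hc, sub_eq_zero] using this

lemma polarization (hE : JacobiOneEigenspaceEq R A)
    (hAskew : ∀ x y : V, ⟪A x, y⟫ = -⟪x, A y⟫) {v w e : V}
    (hev : ⟪e, v⟫ = 0) (hew : ⟪e, w⟫ = 0) (heA : ⟪e, A v⟫ = 0) :
    ⟪A v, A v⟫ * (R e v w (A v) + R e w v (A v)) =
      (R (A v) v v (A v) - ⟪v, v⟫ * ⟪A v, A v⟫) * ⟪e, A w⟫ := by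
  have key : ∀ t : ℝ, let y := v + t • w; let z := ⟪A y, A y⟫ • e + (-⟪e, A y⟫) • A y;
      R z y y (A v) = ⟪y, y⟫ * ⟪z, A v⟫ := by
    intro t y z
    have hey : ⟪e, y⟫ = 0 := by simp [y, inner_add_right, real_inner_smul_right, hev, hew]
    refine (hE.curvature_eq_iff ?_).mpr ?_ (A v)
    · simp [z, inner_add_left, real_inner_smul_left, hey, inner_apply_self_eq_zero_of_skew hAskew]
    · simp only [z, inner_add_left, real_inner_smul_left]
      ring
  have hR : R e v v (A v) = 0 := by
    rw [(hE.curvature_eq_iff hev).mpr heA, heA, mul_zero]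
  simp only [map_add, map_smul, LinearMap.add_apply, LinearMap.smul_apply, smul_eq_mul,
    inner_add_left, inner_add_right, real_inner_smul_left, real_inner_smul_right, heA] at key
  -- `key t` is a polynomial identity of degree four in `t`; this combination of its values
  -- at `±1, ±2` is its coefficient of `t`.
  linear_combination (2 / 3 : ℝ) * (key 1 - key (-1)) - (1 / 12 : ℝ) * (key 2 - key (-2))
    - (⟪A w, A v⟫ + ⟪A v, A w⟫) * hR

lemma curvature_ne_inner (hE : JacobiOneEigenspaceEq R A)
    (hskew : ∀ X Y Z W : V, R X Y Z W = - R Y X Z W)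
    (hpair : ∀ X Y Z W : V, R X Y Z W = R Z W X Y)
    (hAskew : ∀ x y : V, ⟪A x, y⟫ = -⟪x, A y⟫) (hAinj : Function.Injective A) {v : V}
    (hv : v ≠ 0) : R (A v) v v (A v) ≠ ⟪v, v⟫ * ⟪A v, A v⟫ := by
  intro hΛ
  have hvv : ⟪v, v⟫ ≠ 0 := inner_self_ne_zero.mpr hv
  have hAv : ⟪A v, A v⟫ ≠ 0 := inner_self_ne_zero.mpr ((map_ne_zero_iff A hAinj).mpr hv)
  have hAvv : ⟪A v, v⟫ = 0 := inner_apply_self_eq_zero_of_skew hAskew v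
  have hvAv : ⟪v, A v⟫ = 0 := by rw [real_inner_comm]; exact hAvv
  -- `A v` would lie in the curvature-one eigenspace of `v`, hence be orthogonal to itself.
  refine hAv ((hE.curvature_eq_iff hAvv).mp fun u => ?_)
  -- a multiple of the component of `u` orthogonal to `v` and `A v`
  set w := (⟪v, v⟫ * ⟪A v, A v⟫) • u + (-(⟪A v, A v⟫ * ⟪u, v⟫)) • v + (-(⟪v, v⟫ * ⟪u, A v⟫)) • A v
  have hwv : ⟪w, v⟫ = 0 := by
    simp only [w, inner_add_left, real_inner_smul_left, hAvv]; ring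
  have hwA : ⟪w, A v⟫ = 0 := by
    simp only [w, inner_add_left, real_inner_smul_left, hvAv]; ring
  have h := (hE.curvature_eq_iff hwv).mpr hwA (A v)
  simp only [w, map_add, map_smul, LinearMap.add_apply, LinearMap.smul_apply, smul_eq_mul,
    hwA, mul_zero, hΛ] at h
  have hvvv : R v v v (A v) = 0 := by linarith [hskew v v v (A v)]
  have hsym : R (A v) v v u = R u v v (A v) := by
    linarith [hpair (A v) v v u, hskew v u (A v) v, curvature_swap_right hskew hpair u v (A v) v]
  rw [hsym, real_inner_comm u (A v)]
  have : ⟪v, v⟫ * ⟪A v, A v⟫ * (R u v v (A v) - ⟪v, v⟫ * ⟪u, A v⟫) = 0 := by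
    linear_combination h + ⟪A v, A v⟫ * ⟪u, v⟫ * hvvv
  exact sub_eq_zero.mp ((mul_eq_zero.mp this).resolve_left (mul_ne_zero hvv hAv))

lemma not_anticommute (hE : JacobiOneEigenspaceEq R A)
    (hJiso : ∀ x y : V, ⟪J x, J y⟫ = ⟪x, y⟫) (hJ2 : ∀ x : V, J (J x) = -x)
    (hskew : ∀ X Y Z W : V, R X Y Z W = - R Y X Z W)
    (hpair : ∀ X Y Z W : V, R X Y Z W = R Z W X Y)
    (hkahler : ∀ X Y Z W : V, R (J X) (J Y) Z W = R X Y Z W)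
    (hAskew : ∀ x y : V, ⟪A x, y⟫ = -⟪x, A y⟫) (hAinj : Function.Injective A) [Nontrivial V] :
    ¬ ∀ x : V, A (J x) = -J (A x) := by
  intro hanti
  obtain ⟨v, hv⟩ := exists_ne (0 : V)
  have hJskew := skew_of_inner_map_map hJiso hJ2
  have hAvJv : ⟪A v, J v⟫ = 0 := by
    have h := hAskew v (J v)
    rw [hanti, inner_neg_right, neg_neg] at h
    linarith [hJskew v (A v), real_inner_comm (A v) (J v)]
  have hev : ⟪J (A v), v⟫ = 0 := by linarith [hJskew (A v) v, real_inner_comm (A v) (J v)]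
  have hew : ⟪J (A v), J v⟫ = 0 := by rw [hJiso, inner_apply_self_eq_zero_of_skew hAskew]
  have heA : ⟪J (A v), A v⟫ = 0 := inner_apply_self_eq_zero_of_skew hJskew (A v)
  have hP := hE.polarization hAskew hev hew heA
  rw [hkahler, curvature_J_right hJ2 hpair hkahler, (hE.curvature_eq_iff hev).mpr heA,
    hanti, inner_neg_right, hJiso] at hP
  refine hE.curvature_ne_inner hskew hpair hAskew hAinj hv ?_
  have : 2 * ⟪A v, A v⟫ * (R (A v) v v (A v) - ⟪v, v⟫ * ⟪A v, A v⟫) = 0 := by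
    linear_combination hP
  have hAv : ⟪A v, A v⟫ ≠ 0 := inner_self_ne_zero.mpr ((map_ne_zero_iff A hAinj).mpr hv)
  exact sub_eq_zero.mp ((mul_eq_zero.mp this).resolve_left (mul_ne_zero two_ne_zero hAv))

lemma inner_J_apply_J_eq_zero (hE : JacobiOneEigenspaceEq R A)
    (hJiso : ∀ x y : V, ⟪J x, J y⟫ = ⟪x, y⟫) (hJ2 : ∀ x : V, J (J x) = -x)
    (hpair : ∀ X Y Z W : V, R X Y Z W = R Z W X Y)
    (hkahler : ∀ X Y Z W : V, R (J X) (J Y) Z W = R X Y Z W) {y z : V}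
    (hzy : ⟪z, y⟫ = 0) (hzA : ⟪z, A y⟫ = 0) : ⟪J z, A (J y)⟫ = 0 := by
  refine (hE.curvature_eq_iff (by rwa [hJiso])).mp fun u => ?_
  rw [hkahler, curvature_J_right hJ2 hpair hkahler, (hE.curvature_eq_iff hzy).mpr hzA,
    hJiso, skew_of_inner_map_map hJiso hJ2]
  ring

lemma exists_apply_J_eq_smul [FiniteDimensional ℝ V] (hE : JacobiOneEigenspaceEq R A)
    (hJiso : ∀ x y : V, ⟪J x, J y⟫ = ⟪x, y⟫) (hJ2 : ∀ x : V, J (J x) = -x)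
    (hpair : ∀ X Y Z W : V, R X Y Z W = R Z W X Y)
    (hkahler : ∀ X Y Z W : V, R (J X) (J Y) Z W = R X Y Z W)
    (hAskew : ∀ x y : V, ⟪A x, y⟫ = -⟪x, A y⟫) (y : V) : ∃ b : ℝ, A (J y) = b • J (A y) := by
  rcases eq_or_ne y 0 with rfl | hy
  · exact ⟨0, by simp⟩
  have hJskew := skew_of_inner_map_map hJiso hJ2
  have hmem : J (A (J y)) ∈ (Submodule.span ℝ {y, A y})ᗮᗮ := by
    refine (Submodule.mem_orthogonal _ _).mpr fun z hz => ?_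
    rw [mem_orthogonal_span_pair_iff] at hz
    have h := hJskew z (A (J y))
    rw [hE.inner_J_apply_J_eq_zero hJiso hJ2 hpair hkahler hz.1 hz.2] at h
    linarith
  rw [Submodule.orthogonal_orthogonal, Submodule.mem_span_pair] at hmem
  obtain ⟨a, b, hab⟩ := hmem
  have hAJ : A (J y) = (-a) • J y + (-b) • J (A y) := by
    have h := hJ2 (A (J y))
    rw [← hab, map_add, map_smul, map_smul] at h
    rw [← neg_neg (A (J y)), ← h]
    module
  have ha : a * ⟪y, y⟫ = 0 := by
    have h := inner_apply_self_eq_zero_of_skew hAskew (J y)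
    rw [hAJ, inner_add_left, real_inner_smul_left, real_inner_smul_left, hJiso, hJiso,
      inner_apply_self_eq_zero_of_skew hAskew] at h
    linarith
  rw [mul_eq_zero, or_iff_left (inner_self_ne_zero.mpr hy)] at ha
  exact ⟨-b, by rw [hAJ, ha, neg_zero, zero_smul, zero_add]⟩

lemma eigenvalue_relation (hE : JacobiOneEigenspaceEq R A)
    (hJiso : ∀ x y : V, ⟪J x, J y⟫ = ⟪x, y⟫) (hJ2 : ∀ x : V, J (J x) = -x)
    (hskew : ∀ X Y Z W : V, R X Y Z W = - R Y X Z W)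
    (hpair : ∀ X Y Z W : V, R X Y Z W = R Z W X Y)
    (hbianchi : ∀ X Y Z W : V, R X Y Z W + R Y Z X W + R Z X Y W = 0)
    (hkahler : ∀ X Y Z W : V, R (J X) (J Y) Z W = R X Y Z W)
    (hAskew : ∀ x y : V, ⟪A x, y⟫ = -⟪x, A y⟫) {x y : V} {s t : ℝ}
    (hx : ‖x‖ = 1) (hy : ‖y‖ = 1) (hyx : ⟪y, x⟫ = 0) (hyJx : ⟪y, J x⟫ = 0)
    (hAx : A x = s • J x) (hAy : A y = t • J y) (hs : s ≠ 0) :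
    3 * s = (R (J x) x x (J x) - 1) * t := by
  have hJskew := skew_of_inner_map_map hJiso hJ2
  have hxx : ⟪x, x⟫ = 1 := inner_self_eq_one_of_norm_eq_one hx
  have hyy : ⟪y, y⟫ = 1 := inner_self_eq_one_of_norm_eq_one hy
  have hsec : R y x x y = 1 := by
    rw [(hE.curvature_eq_iff hyx).mpr (by rw [hAx, real_inner_smul_right, hyJx, mul_zero]),
      hxx, hyy, one_mul]
  have hsecJ : R y (J x) (J x) y = 1 := by
    have hyAJx : ⟪y, A (J x)⟫ = 0 := by
      rw [← neg_eq_zero, ← hAskew, hAy, real_inner_smul_left, hJiso, hyx, mul_zero]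
    rw [(hE.curvature_eq_iff hyJx).mpr hyAJx, hJiso, hxx, hyy, one_mul]
  have hP := hE.polarization hAskew (v := x) (w := y) (e := J y)
    (by rw [hJskew, hyJx, neg_zero]) (inner_apply_self_eq_zero_of_skew hJskew y)
    (by rw [hAx, real_inner_smul_right, hJiso, hyx, mul_zero])
  rw [hAx, hAy] at hP
  simp only [map_smul, LinearMap.smul_apply, smul_eq_mul, real_inner_smul_left,
    real_inner_smul_right, hJiso, hxx, hyy] at hP
  rw [curvature_J_cross hJ2 hskew hpair hkahler, hpair (J y),
    curvature_bisectional hJ2 hskew hpair hbianchi hkahler, hsec, hsecJ] at hP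
  have : s ^ 2 * (3 * s - (R (J x) x x (J x) - 1) * t) = 0 := by linear_combination hP
  exact sub_eq_zero.mp ((mul_eq_zero.mp this).resolve_left (pow_ne_zero 2 hs))

lemma eigenvalue_eq [FiniteDimensional ℝ V] (hE : JacobiOneEigenspaceEq R A)
    (hdim : 6 ≤ Module.finrank ℝ V)
    (hJiso : ∀ x y : V, ⟪J x, J y⟫ = ⟪x, y⟫) (hJ2 : ∀ x : V, J (J x) = -x)
    (hskew : ∀ X Y Z W : V, R X Y Z W = - R Y X Z W)
    (hpair : ∀ X Y Z W : V, R X Y Z W = R Z W X Y)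
    (hbianchi : ∀ X Y Z W : V, R X Y Z W + R Y Z X W + R Z X Y W = 0)
    (hkahler : ∀ X Y Z W : V, R (J X) (J Y) Z W = R X Y Z W)
    (hAskew : ∀ x y : V, ⟪A x, y⟫ = -⟪x, A y⟫) (hAinj : Function.Injective A)
    {S : V →ₗ[ℝ] V} (hS : S.IsSymmetric) (hSJ : ∀ x, S (J x) = J (S x))
    (hAS : ∀ x, A x = J (S x)) {u u' : V} {μ ν : ℝ} (hu : ‖u‖ = 1) (hu' : ‖u'‖ = 1)
    (hSu : S u = μ • u) (hSu' : S u' = ν • u') : μ = ν := by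
  classical
  have hA_eig {x : V} {r : ℝ} (h : S x = r • x) : A x = r • J x := by
    rw [hAS, h, map_smul]
  have hJ_eig {x : V} {r : ℝ} (h : S x = r • x) : S (J x) = r • J x := by
    rw [hSJ, h, map_smul]
  have hne {x : V} {r : ℝ} (hx : ‖x‖ = 1) (h : S x = r • x) : r ≠ 0 := by
    rintro rfl
    have : A x = 0 := by rw [hA_eig h, zero_smul]
    rw [(map_eq_zero_iff A hAinj).mp this, norm_zero] at hx
    exact zero_ne_one hx
  have horth {x y : V} {r r' : ℝ} (hx : S x = r • x) (hy : S y = r' • y) (hrr : r ≠ r') :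
      ⟪y, x⟫ = 0 := by
    have h := hS y x
    rw [hx, hy, real_inner_smul_left, real_inner_smul_right] at h
    exact (mul_eq_zero.mp (by linear_combination h : (r' - r) * ⟪y, x⟫ = 0)).resolve_left
      (sub_ne_zero.mpr (Ne.symm hrr))
  have hdet {x y z : V} {r t t' : ℝ} (hx : ‖x‖ = 1) (hy : ‖y‖ = 1) (hz : ‖z‖ = 1)
      (hSx : S x = r • x) (hSy : S y = t • y) (hSz : S z = t' • z)
      (hyx : ⟪y, x⟫ = 0) (hyJx : ⟪y, J x⟫ = 0) (hzx : ⟪z, x⟫ = 0) (hzJx : ⟪z, J x⟫ = 0) :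
      t = t' := by
    have h1 := hE.eigenvalue_relation hJiso hJ2 hskew hpair hbianchi hkahler hAskew hx hy hyx hyJx
      (hA_eig hSx) (hA_eig hSy) (hne hx hSx)
    have h2 := hE.eigenvalue_relation hJiso hJ2 hskew hpair hbianchi hkahler hAskew hx hz hzx hzJx
      (hA_eig hSx) (hA_eig hSz) (hne hx hSx)
    have hH : R (J x) x x (J x) - 1 ≠ 0 := by
      intro h0
      rw [h0, zero_mul] at h1
      exact hne hx hSx (by linarith)
    exact mul_left_cancel₀ hH (h1.symm.trans h2)
  by_contra hμν
  obtain ⟨u'', hu'', ⟨r, hSu''⟩, hperp⟩ := hS.exists_unit_eigenvector_orthogonal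
    {u, J u, u', J u'} (Finset.card_le_four.trans_lt (by omega))
    (by simpa using ⟨⟨μ, hSu⟩, ⟨μ, hJ_eig hSu⟩, ⟨ν, hSu'⟩, ⟨ν, hJ_eig hSu'⟩⟩)
  simp only [Finset.mem_insert, Finset.mem_singleton, forall_eq_or_imp, forall_eq] at hperp
  obtain ⟨h1, h2, h3, h4⟩ := hperp
  have hνr := hdet hu hu' hu'' hSu hSu' hSu'' (horth hSu hSu' hμν)
    (horth (hJ_eig hSu) hSu' hμν) h1 h2
  have hμr := hdet hu' hu hu'' hSu' hSu hSu'' (horth hSu' hSu (Ne.symm hμν))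
    (horth (hJ_eig hSu') hSu (Ne.symm hμν)) h3 h4
  exact hμν (hμr.trans hνr.symm)

lemma curvature_ratio_eq_four_of_commute [FiniteDimensional ℝ V]
    (hE : JacobiOneEigenspaceEq R A) (hdim : 6 ≤ Module.finrank ℝ V)
    (hJiso : ∀ x y : V, ⟪J x, J y⟫ = ⟪x, y⟫) (hJ2 : ∀ x : V, J (J x) = -x)
    (hskew : ∀ X Y Z W : V, R X Y Z W = - R Y X Z W)
    (hpair : ∀ X Y Z W : V, R X Y Z W = R Z W X Y)
    (hbianchi : ∀ X Y Z W : V, R X Y Z W + R Y Z X W + R Z X Y W = 0)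
    (hkahler : ∀ X Y Z W : V, R (J X) (J Y) Z W = R X Y Z W)
    (hAskew : ∀ x y : V, ⟪A x, y⟫ = -⟪x, A y⟫) (hAinj : Function.Injective A)
    (hcom : ∀ x, A (J x) = J (A x)) {v : V} (hv : ‖v‖ = 1) :
    R v (A v) (A v) v / ‖A v‖ ^ 2 = 4 := by
  classical
  have : Nontrivial V := Module.nontrivial_of_finrank_pos (R := ℝ) (by omega)
  have hJskew := skew_of_inner_map_map hJiso hJ2
  let S : V →ₗ[ℝ] V := -(J ∘ₗ A)
  have hAS (x : V) : A x = J (S x) := by simp [S, hJ2]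
  have hSJ (x : V) : S (J x) = J (S x) := by simp [S, hcom]
  have hS : S.IsSymmetric := fun x y => by
    simp only [S, LinearMap.neg_apply, LinearMap.comp_apply, inner_neg_left, inner_neg_right,
      hJskew, hAskew, hcom, neg_neg]
  obtain ⟨s, hs⟩ := hS.exists_eq_smul_of_eigenvalues_eq fun u u' μ ν hu hu' =>
    hE.eigenvalue_eq hdim hJiso hJ2 hskew hpair hbianchi hkahler hAskew hAinj hS hSJ hAS hu hu'
  have hA (x : V) : A x = s • J x := by rw [hAS, hs, map_smul]
  have hs0 : s ≠ 0 := by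
    rintro rfl
    have : A v = 0 := by rw [hA, zero_smul]
    rw [(map_eq_zero_iff A hAinj).mp this, norm_zero] at hv
    exact zero_ne_one hv
  obtain ⟨y, hy, -, hperp⟩ := hS.exists_unit_eigenvector_orthogonal {v, J v}
    (Finset.card_le_two.trans_lt (by omega)) fun x _ => ⟨s, hs x⟩
  simp only [Finset.mem_insert, Finset.mem_singleton, forall_eq_or_imp, forall_eq] at hperp
  have h := hE.eigenvalue_relation hJiso hJ2 hskew hpair hbianchi hkahler hAskew hv hy
    hperp.1 hperp.2 (hA v) (hA y) hs0
  have hH : R v (J v) (J v) v = 4 := by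
    have h4 : (R (J v) v v (J v) - 4) * s = 0 := by linear_combination -h
    rw [hpair]
    linarith [(mul_eq_zero.mp h4).resolve_right hs0]
  have hJv : ‖J v‖ = 1 := ((J.isometryOfInner hJiso).norm_map v).trans hv
  rw [hA, norm_smul, hJv, map_smul, LinearMap.smul_apply, map_smul, LinearMap.smul_apply,
    LinearMap.smul_apply, hH, smul_eq_mul, smul_eq_mul, Real.norm_eq_abs, mul_one, sq_abs]
  field_simp

end JacobiOneEigenspaceEq

end JacobiEigenspace

end

theorem stmt_18_general
    {V : Type*} [NormedAddCommGroup V] [InnerProductSpace ℝ V] [FiniteDimensional ℝ V]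
    (hdim : 6 ≤ Module.finrank ℝ V)
    (J : V →ₗ[ℝ] V)
    (hJiso : ∀ x y : V, ⟪J x, J y⟫ = ⟪x, y⟫)
    (hJ2 : ∀ x : V, J (J x) = -x)
    (R : V →ₗ[ℝ] V →ₗ[ℝ] V →ₗ[ℝ] V →ₗ[ℝ] ℝ)
    (hskew : ∀ X Y Z W : V, R X Y Z W = - R Y X Z W)
    (hpair : ∀ X Y Z W : V, R X Y Z W = R Z W X Y)
    (hbianchi : ∀ X Y Z W : V, R X Y Z W + R Y Z X W + R Z X Y W = 0)
    (hkahler : ∀ X Y Z W : V, R (J X) (J Y) Z W = R X Y Z W)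
    (A : V →ₗ[ℝ] V) (hAinv : Function.Bijective A)
    (hAskew : ∀ x y : V, ⟪A x, y⟫ = -⟪x, A y⟫)
    (hE : ∀ v : V, ‖v‖ = 1 → ∀ w : V,
      (⟪w, v⟫ = 0 ∧ ∀ u : V, R w v v u = ⟪w, u⟫) ↔
        w ∈ (Submodule.span ℝ {v, A v})ᗮ) :
    ∀ v : V, ‖v‖ = 1 → R v (A v) (A v) v / ‖A v‖ ^ 2 = 4 := by
  replace hE : JacobiOneEigenspaceEq R A := hE
  have : Nontrivial V := Module.nontrivial_of_finrank_pos (R := ℝ) (by omega)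
  have hJbij : Function.Bijective J :=
    ⟨fun x y h => neg_injective (by simpa only [hJ2] using congrArg J h),
      fun x => ⟨-J x, by rw [map_neg, hJ2, neg_neg]⟩⟩
  obtain ⟨c, hc⟩ := LinearMap.exists_eq_smul_of_forall_exists_eq_smul
    (f := A ∘ₗ J) (g := J ∘ₗ A) (hJbij.comp hAinv)
    (hE.exists_apply_J_eq_smul hJiso hJ2 hpair hkahler hAskew)
  have hc' (x : V) : A (J x) = c • J (A x) := LinearMap.congr_fun hc x
  rcases eq_one_or_eq_neg_one_of_apply_J_eq_smul hJiso hJ2 hAskew hAinv.injective hc' with rfl | rfl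
  · exact fun v => hE.curvature_ratio_eq_four_of_commute hdim hJiso hJ2 hskew hpair hbianchi
      hkahler hAskew hAinv.injective fun x => by simpa using hc' x
  · exact absurd (fun x => by simpa using hc' x)
      (hE.not_anticommute hJiso hJ2 hskew hpair hkahler hAskew hAinv.injective)

/-- In the Kähler cvc(1) package with `dim V ≥ 6`,
`λ(v) = R(v,Av,Av,v)/‖Av‖² = 4` for every unit vector `v`. -/
theorem stmt_18
    {V : Type*} [NormedAddCommGroup V] [InnerProductSpace ℝ V] [FiniteDimensional ℝ V]
    (hdim : 6 ≤ Module.finrank ℝ V)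
    (J : V →ₗ[ℝ] V)
    (hJiso : ∀ x y : V, ⟪J x, J y⟫ = ⟪x, y⟫)
    (hJ2 : ∀ x : V, J (J x) = -x)
    (R : V →ₗ[ℝ] V →ₗ[ℝ] V →ₗ[ℝ] V →ₗ[ℝ] ℝ)
    (hskew : ∀ X Y Z W : V, R X Y Z W = - R Y X Z W)
    (hpair : ∀ X Y Z W : V, R X Y Z W = R Z W X Y)
    (hbianchi : ∀ X Y Z W : V, R X Y Z W + R Y Z X W + R Z X Y W = 0)
    (hkahler : ∀ X Y Z W : V, R (J X) (J Y) Z W = R X Y Z W)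
    (hsec : ∀ x y : V, ‖x‖ = 1 → ‖y‖ = 1 → ⟪x, y⟫ = 0 → 1 ≤ R y x x y)
    (A : V →ₗ[ℝ] V) (hAinv : Function.Bijective A)
    (hAskew : ∀ x y : V, ⟪A x, y⟫ = -⟪x, A y⟫)
    (hE : ∀ v : V, ‖v‖ = 1 → ∀ w : V,
      (⟪w, v⟫ = 0 ∧ ∀ u : V, R w v v u = ⟪w, u⟫) ↔
        w ∈ (Submodule.span ℝ {v, A v})ᗮ) :
    ∀ v : V, ‖v‖ = 1 → R v (A v) (A v) v / ‖A v‖ ^ 2 = 4 :=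
  stmt_18_general hdim J hJiso hJ2 R hskew hpair hbianchi hkahler A hAinv hAskew hE
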